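/- arXiv:2007.14764 — 2 statements merged into one kernel-verified Lean document; each statement's English description precedes it below -/
import Mathlib

section
/- Let n ≥ 2 and let φ : 𝔹ⁿ → ℝ be a smooth function such that {z ∈ 𝔹ⁿ : φ(z) > 0} is nonempty. Then for each j ∈ {1,…,n} the function z ↦ (1 − |z|²)(∂φ/∂z̄_j − z_j Σ_{l=1}^n z̄_l ∂φ/∂z̄_l) is holomorphic on 𝔹ⁿ if and only if there exist a Hermitian n×n matrix (c_{jk}), complex constants α_1,…,α_n, and a real constant γ such that (1 − |z|²) φ(z) = Σ_{j,k} c_{jk} z_j z̄_k + Re(Σ_k α_k z_k) + γ on 𝔹ⁿ. (The displayed function is the j-th component of (∂̄φ)^♯ with respect to the complex hyperbolic metric h_{j k̄} = (1 − |z|²)^{-1}(δ_{jk} + z̄_j z_k/(1 − |z|²)), and its holomorphicity characterizes when the conformal metric g = φ^{-1} h on {φ > 0} has holomorphic torsion.) -/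
open Complex MeasureTheory Finset

noncomputable section

/-- The Wirtinger derivative `∂f/∂z̄ₖ` of a (real-differentiable) function
`f : ℂⁿ → ℂ`, namely `½(∂f/∂xₖ + i ∂f/∂yₖ)`. -/
def wirtZBar {n : ℕ} (f : (Fin n → ℂ) → ℂ) (k : Fin n) (z : Fin n → ℂ) : ℂ :=
  (1 / 2 : ℂ) *
    (fderiv ℝ f z (Pi.single k 1) + Complex.I * fderiv ℝ f z (Pi.single k Complex.I))

/-- The Wirtinger derivative `∂ψ/∂z̄ₖ` of a real-valued function. -/
def wirtZBarR {n : ℕ} (ψ : (Fin n → ℂ) → ℝ) (k : Fin n) (z : Fin n → ℂ) : ℂ :=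
  wirtZBar (fun w => (ψ w : ℂ)) k z

/-- `|z|² = Σ |zₖ|²` for `z ∈ ℂⁿ`. -/
def normSq' {n : ℕ} (z : Fin n → ℂ) : ℝ := ∑ i, Complex.normSq (z i)

/-- The open unit ball `𝔹ⁿ ⊂ ℂⁿ`. -/
def unitBall (n : ℕ) : Set (Fin n → ℂ) := {z | normSq' z < 1}

/-!
Put `ψ = (1 - |z|²) φ`. Expressed through `ψ`, the `j`-th component becomes
`Fⱼ = ∂̄ⱼψ + zⱼ (ψ - Σₗ z̄ₗ ∂̄ₗψ)`, and `∂̄ₖFⱼ = vⱼ - zⱼ Σₗ z̄ₗ vₗ` with `vⱼ = ∂̄ₖ∂̄ⱼψ`.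
Inside the ball `v = z Σₗ z̄ₗ vₗ` forces `v = 0` (pair with `z̄` and use `|z| < 1`), so all `Fⱼ`
are holomorphic iff `∂̄∂̄ψ = 0`.

For real `ψ` with `∂̄∂̄ψ = 0`, the complex Hessian `∂ₐ∂̄_bψ` is Hermitian, is annihilated by `∂̄`
(derivatives commute) and hence, by conjugation, also by `∂`: it is a constant matrix `c`.
Then `∂̄_bψ - Σₐ c_{ab} zₐ` is constant as well, and a real function is determined up to an
additive constant by its `∂̄`-derivatives, which pins `ψ` down as the stated Hermitian polynomial.
-/

open scoped ComplexConjugate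

section

variable {n : ℕ}

def wirtZ (f : (Fin n → ℂ) → ℂ) (k : Fin n) (z : Fin n → ℂ) : ℂ :=
  (1 / 2 : ℂ) * (fderiv ℝ f z (Pi.single k 1) - I * fderiv ℝ f z (Pi.single k I))

section Wirtinger

variable {f g : (Fin n → ℂ) → ℂ} {z : Fin n → ℂ} {k : Fin n}

theorem fderiv_apply_eq_sum_wirtZ (f : (Fin n → ℂ) → ℂ) (z v : Fin n → ℂ) :
    fderiv ℝ f z v = ∑ k, (wirtZ f k z * v k + wirtZBar f k z * conj (v k)) := by
  have hsingle : ∀ k, Pi.single k (v k) =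
      (v k).re • (Pi.single k 1 : Fin n → ℂ) + (v k).im • (Pi.single k I : Fin n → ℂ) := by
    intro k
    rw [← Pi.single_smul, ← Pi.single_smul, ← Pi.single_add, real_smul, real_smul, mul_one,
      re_add_im]
  conv_lhs => rw [← Finset.univ_sum_single v]
  simp only [map_sum, hsingle, map_add, map_smul, real_smul, wirtZ, wirtZBar]
  refine Finset.sum_congr rfl fun k _ => ?_
  conv_rhs => rw [← re_add_im (v k)]
  simp only [map_add, map_mul, conj_ofReal, conj_I]
  linear_combination ((v k).im * fderiv ℝ f z (Pi.single k I)) * I_mul_I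

theorem wirtZBar_eq_zero_of_differentiableAt (hf : DifferentiableAt ℂ f z) (k : Fin n) :
    wirtZBar f k z = 0 := by
  have hI : (Pi.single k I : Fin n → ℂ) = I • Pi.single k 1 := by
    rw [← Pi.single_smul, smul_eq_mul, mul_one]
  rw [wirtZBar, hI, hf.fderiv_restrictScalars ℝ]
  simp only [ContinuousLinearMap.coe_restrictScalars', map_smul, smul_eq_mul]
  linear_combination (1 / 2 : ℂ) * fderiv ℂ f z (Pi.single k 1) * I_mul_I

theorem differentiableAt_iff_wirtZBar_eq_zero (hf : DifferentiableAt ℝ f z) :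
    DifferentiableAt ℂ f z ↔ ∀ k, wirtZBar f k z = 0 := by
  refine ⟨fun h k => wirtZBar_eq_zero_of_differentiableAt h k, fun h => ?_⟩
  rw [differentiableAt_iff_restrictScalars ℝ hf]
  refine ⟨∑ k, wirtZ f k z • ContinuousLinearMap.proj k, ContinuousLinearMap.ext fun v => ?_⟩
  simp [fderiv_apply_eq_sum_wirtZ, h, mul_comm]

theorem differentiableOn_iff_wirtZBar_eq_zero {U : Set (Fin n → ℂ)} (hU : IsOpen U)
    (hf : DifferentiableOn ℝ f U) :
    DifferentiableOn ℂ f U ↔ ∀ k, ∀ z ∈ U, wirtZBar f k z = 0 := by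
  have hfU : ∀ z ∈ U, DifferentiableAt ℝ f z := fun z hz => hf.differentiableAt (hU.mem_nhds hz)
  refine ⟨fun h k z hz => wirtZBar_eq_zero_of_differentiableAt
    (h.differentiableAt (hU.mem_nhds hz)) k, fun h z hz => ?_⟩
  exact ((differentiableAt_iff_wirtZBar_eq_zero (hfU z hz)).2
    fun k => h k z hz).differentiableWithinAt

theorem wirtZBar_add (hf : DifferentiableAt ℝ f z) (hg : DifferentiableAt ℝ g z) :
    wirtZBar (fun w => f w + g w) k z = wirtZBar f k z + wirtZBar g k z := by
  simp only [wirtZBar, fderiv_fun_add hf hg, add_apply]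
  ring

theorem wirtZBar_sub (hf : DifferentiableAt ℝ f z) (hg : DifferentiableAt ℝ g z) :
    wirtZBar (fun w => f w - g w) k z = wirtZBar f k z - wirtZBar g k z := by
  simp only [wirtZBar, fderiv_fun_sub hf hg, sub_apply]
  ring

theorem wirtZ_sub (hf : DifferentiableAt ℝ f z) (hg : DifferentiableAt ℝ g z) :
    wirtZ (fun w => f w - g w) k z = wirtZ f k z - wirtZ g k z := by
  simp only [wirtZ, fderiv_fun_sub hf hg, sub_apply]
  ring

theorem wirtZBar_mul (hf : DifferentiableAt ℝ f z) (hg : DifferentiableAt ℝ g z) :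
    wirtZBar (fun w => f w * g w) k z = f z * wirtZBar g k z + g z * wirtZBar f k z := by
  simp only [wirtZBar, fderiv_fun_mul hf hg, add_apply, smul_apply, smul_eq_mul]
  ring

theorem wirtZBar_sum {ι : Type*} {s : Finset ι} {F : ι → (Fin n → ℂ) → ℂ}
    (hF : ∀ i ∈ s, DifferentiableAt ℝ (F i) z) :
    wirtZBar (fun w => ∑ i ∈ s, F i w) k z = ∑ i ∈ s, wirtZBar (F i) k z := by
  simp only [wirtZBar, fderiv_fun_sum hF, _root_.sum_apply, Finset.mul_sum,
    ← Finset.sum_add_distrib]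

theorem fderiv_conj (f : (Fin n → ℂ) → ℂ) :
    fderiv ℝ (fun w => conj (f w)) z = conjCLE.toContinuousLinearMap.comp (fderiv ℝ f z) :=
  conjCLE.comp_fderiv

theorem wirtZBar_conj (f : (Fin n → ℂ) → ℂ) :
    wirtZBar (fun w => conj (f w)) k z = conj (wirtZ f k z) := by
  simp [wirtZBar, wirtZ, fderiv_conj, map_ofNat]

theorem wirtZ_conj (f : (Fin n → ℂ) → ℂ) :
    wirtZ (fun w => conj (f w)) k z = conj (wirtZBar f k z) := by
  have h := wirtZBar_conj (k := k) (z := z) fun w => conj (f w)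
  simp only [conj_conj] at h
  rw [h, conj_conj]

theorem wirtZ_ofReal (ψ : (Fin n → ℂ) → ℝ) :
    wirtZ (fun w => (ψ w : ℂ)) k z = conj (wirtZBarR ψ k z) := by
  rw [wirtZBarR, ← wirtZ_conj]
  simp only [conj_ofReal]

theorem wirtZBar_conj_apply (j : Fin n) :
    wirtZBar (fun w : Fin n → ℂ => conj (w j)) k z = (Pi.single k 1 : Fin n → ℂ) j := by
  have h : fderiv ℝ (fun w : Fin n → ℂ => w j) z = ContinuousLinearMap.proj j :=
    (ContinuousLinearMap.proj (R := ℝ) (φ := fun _ : Fin n => ℂ) j).fderiv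
  rw [wirtZBar_conj, wirtZ, h]
  by_cases hjk : j = k
  · subst hjk; norm_num [map_ofNat]
  · simp [hjk]

theorem wirtZBar_congr (h : f =ᶠ[nhds z] g) : wirtZBar f k z = wirtZBar g k z := by
  simp only [wirtZBar, h.fderiv_eq]

theorem wirtZ_congr (h : f =ᶠ[nhds z] g) : wirtZ f k z = wirtZ g k z := by
  simp only [wirtZ, h.fderiv_eq]

theorem wirtZBar_sum_mul_conj {g : Fin n → (Fin n → ℂ) → ℂ}
    (hg : ∀ k, DifferentiableAt ℂ (g k) z) (m : Fin n) :
    wirtZBar (fun w => ∑ k, g k w * conj (w k)) m z = g m z := by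
  have hconj : ∀ k, DifferentiableAt ℝ (fun w : Fin n → ℂ => conj (w k)) z := by fun_prop
  calc _ = ∑ k, g k z * (Pi.single m 1 : Fin n → ℂ) k := by
        rw [wirtZBar_sum fun k _ => ((hg k).restrictScalars ℝ).fun_mul (hconj k)]
        refine Finset.sum_congr rfl fun k _ => ?_
        rw [wirtZBar_mul ((hg k).restrictScalars ℝ) (hconj k), wirtZBar_conj_apply,
          wirtZBar_eq_zero_of_differentiableAt (hg k), mul_zero, add_zero]
    _ = g m z := by simp [Pi.single_apply]

theorem wirtZ_sum_mul (c : Fin n → ℂ) (m : Fin n) :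
    wirtZ (fun w => ∑ a, c a * w a) m z = c m := by
  have h := wirtZBar_sum_mul_conj (z := z) (g := fun a _ => conj (c a))
    (fun _ => differentiableAt_const _) m
  have hfun : (fun w : Fin n → ℂ => ∑ a, conj (c a) * conj (w a)) =
      fun w => conj (∑ a, c a * w a) := by
    funext w; simp [map_sum]
  rw [hfun, wirtZBar_conj] at h
  exact (RingHom.injective _ h)

theorem fderiv_eq_of_wirtZ_eq_of_wirtZBar_eq (h₁ : ∀ k, wirtZ f k z = wirtZ g k z)
    (h₂ : ∀ k, wirtZBar f k z = wirtZBar g k z) : fderiv ℝ f z = fderiv ℝ g z :=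
  ContinuousLinearMap.ext fun v => by simp only [fderiv_apply_eq_sum_wirtZ, h₁, h₂]

variable {U : Set (Fin n → ℂ)} {z₀ : Fin n → ℂ}

theorem eqOn_of_wirtZ_eq_of_wirtZBar_eq (hU : IsOpen U) (hUc : IsPreconnected U)
    (hf : DifferentiableOn ℝ f U) (hg : DifferentiableOn ℝ g U)
    (h₁ : ∀ k, ∀ z ∈ U, wirtZ f k z = wirtZ g k z)
    (h₂ : ∀ k, ∀ z ∈ U, wirtZBar f k z = wirtZBar g k z) (hz₀ : z₀ ∈ U) (h₀ : f z₀ = g z₀) :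
    Set.EqOn f g U :=
  hU.eqOn_of_fderiv_eq hUc hf hg
    (fun z hz => fderiv_eq_of_wirtZ_eq_of_wirtZBar_eq (h₁ · z hz) (h₂ · z hz)) hz₀ h₀

theorem eq_of_wirtZ_eq_zero_of_wirtZBar_eq_zero (hU : IsOpen U) (hUc : IsPreconnected U)
    (hf : DifferentiableOn ℝ f U) (h₁ : ∀ k, ∀ z ∈ U, wirtZ f k z = 0)
    (h₂ : ∀ k, ∀ z ∈ U, wirtZBar f k z = 0) (hz₀ : z₀ ∈ U) : ∀ z ∈ U, f z = f z₀ :=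
  fun _ hz => eqOn_of_wirtZ_eq_of_wirtZBar_eq (g := fun _ => f z₀) hU hUc hf
    (differentiableOn_const _) (by simpa [wirtZ] using h₁) (by simpa [wirtZBar] using h₂)
    hz₀ rfl hz

theorem eqOn_of_wirtZBarR_eq {ψ χ : (Fin n → ℂ) → ℝ} (hU : IsOpen U) (hUc : IsPreconnected U)
    (hψ : DifferentiableOn ℝ ψ U) (hχ : DifferentiableOn ℝ χ U)
    (h : ∀ k, ∀ z ∈ U, wirtZBarR ψ k z = wirtZBarR χ k z) (hz₀ : z₀ ∈ U) (h₀ : ψ z₀ = χ z₀) :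
    Set.EqOn ψ χ U := by
  have hC := eqOn_of_wirtZ_eq_of_wirtZBar_eq (f := fun w => (ψ w : ℂ)) (g := fun w => (χ w : ℂ))
    hU hUc (ofRealCLM.differentiable.comp_differentiableOn hψ)
    (ofRealCLM.differentiable.comp_differentiableOn hχ)
    (fun k z hz => by rw [wirtZ_ofReal, wirtZ_ofReal, h k z hz]) h hz₀ (by rw [h₀])
  exact fun z hz => ofReal_injective (hC hz)

theorem wirtZ_wirtZBar_comm (hf : ContDiffAt ℝ 2 f z) (j k : Fin n) :
    wirtZ (wirtZBar f k) j z = wirtZBar (wirtZ f j) k z := by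
  set D := fderiv ℝ (fderiv ℝ f) z
  have hD : DifferentiableAt ℝ (fderiv ℝ f) z :=
    (hf.fderiv_right (m := 1) le_rfl).differentiableAt one_ne_zero
  have hsymm : ∀ v w, D v w = D w v := (hf.isSymmSndFDerivAt (by simp)).eq
  have hlin : ∀ (a b : ℂ) (u w v : Fin n → ℂ),
      fderiv ℝ (fun y => a * fderiv ℝ f y u + b * fderiv ℝ f y w) z v = a * D v u + b * D v w := by
    intro a b u w v
    have hu : ∀ u, HasFDerivAt (fun y => fderiv ℝ f y u) (D.flip u) z := fun u => by
      simpa using hD.hasFDerivAt.clm_apply (hasFDerivAt_const u z)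
    rw [(((hu u).const_mul a).fun_add ((hu w).const_mul b)).fderiv]
    simp
  have hbar : wirtZBar f k = fun y => (1 / 2 : ℂ) * fderiv ℝ f y (Pi.single k 1) +
      (I / 2) * fderiv ℝ f y (Pi.single k I) := by
    funext y; simp only [wirtZBar]; ring
  have hhol : wirtZ f j = fun y => (1 / 2 : ℂ) * fderiv ℝ f y (Pi.single j 1) +
      (-I / 2) * fderiv ℝ f y (Pi.single j I) := by
    funext y; simp only [wirtZ]; ring
  rw [hbar, hhol]
  simp only [wirtZ, wirtZBar, hlin]
  rw [hsymm (Pi.single k 1) (Pi.single j 1), hsymm (Pi.single k 1) (Pi.single j I),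
    hsymm (Pi.single k I) (Pi.single j 1), hsymm (Pi.single k I) (Pi.single j I)]
  ring

theorem ContDiffOn.wirtZBar {m : WithTop ℕ∞} (hf : ContDiffOn ℝ (m + 1) f U) (hU : IsOpen U)
    (k : Fin n) : ContDiffOn ℝ m (wirtZBar f k) U := by
  have hD := hf.fderiv_of_isOpen hU le_rfl
  exact contDiffOn_const.mul ((hD.clm_apply contDiffOn_const).add
    (contDiffOn_const.mul (hD.clm_apply contDiffOn_const)))

theorem ContDiffOn.wirtZ {m : WithTop ℕ∞} (hf : ContDiffOn ℝ (m + 1) f U) (hU : IsOpen U)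
    (k : Fin n) : ContDiffOn ℝ m (wirtZ f k) U := by
  have hD := hf.fderiv_of_isOpen hU le_rfl
  exact contDiffOn_const.mul ((hD.clm_apply contDiffOn_const).sub
    (contDiffOn_const.mul (hD.clm_apply contDiffOn_const)))

end Wirtinger

theorem ofReal_normSq' (z : Fin n → ℂ) : (normSq' z : ℂ) = ∑ k, z k * conj (z k) := by
  simp [normSq', mul_conj]

theorem contDiff_normSq' {m : WithTop ℕ∞} : ContDiff ℝ m (normSq' (n := n)) := by
  have h : normSq' (n := n) = fun z => ∑ i, ‖z i‖ ^ 2 :=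
    funext fun z => by simp [normSq', Complex.normSq_eq_norm_sq]
  rw [h]
  exact ContDiff.sum fun i _ => (contDiff_norm_sq ℝ).comp (contDiff_apply ℝ ℂ i)

theorem isOpen_unitBall : IsOpen (unitBall n) :=
  isOpen_lt (contDiff_normSq' (m := 0)).continuous continuous_const

theorem zero_mem_unitBall : (0 : Fin n → ℂ) ∈ unitBall n := by
  simp [unitBall, normSq']

theorem convex_unitBall : Convex ℝ (unitBall n) := by
  have h : unitBall n = (WithLp.linearEquiv 2 ℝ (Fin n → ℂ)).symm.toLinearMap ⁻¹'
      Metric.ball (0 : EuclideanSpace ℂ (Fin n)) 1 := by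
    ext z
    simp [unitBall, normSq', ← sq_lt_one_iff₀ (norm_nonneg _), EuclideanSpace.norm_sq_eq,
      Complex.sq_norm]
  rw [h]
  exact (convex_ball _ _).linear_preimage _

theorem eq_zero_of_forall_eq_mul_sum_conj_mul {z v : Fin n → ℂ} (hz : normSq' z < 1)
    (h : ∀ j, v j = z j * ∑ l, conj (z l) * v l) : v = 0 := by
  set s := ∑ l, conj (z l) * v l
  have hs : s = normSq' z * s :=
    calc s = ∑ l, conj (z l) * (z l * s) := Finset.sum_congr rfl fun l _ => by rw [← h l]
      _ = normSq' z * s := by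
        rw [ofReal_normSq', Finset.sum_mul]
        exact Finset.sum_congr rfl fun l _ => by ring
  have hs0 : s = 0 := by
    have hne : (1 - normSq' z : ℂ) ≠ 0 := by exact_mod_cast (sub_pos.2 hz).ne'
    exact (mul_eq_zero.1 (by linear_combination hs : (1 - normSq' z : ℂ) * s = 0)).resolve_left
      hne
  funext j
  rw [h j, hs0, mul_zero, Pi.zero_apply]

theorem wirtZBarR_one_sub_normSq'_mul {φ : (Fin n → ℂ) → ℝ} {z : Fin n → ℂ}
    (hφ : DifferentiableAt ℝ φ z) (k : Fin n) :
    wirtZBarR (fun w => (1 - normSq' w) * φ w) k z =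
      (1 - normSq' z) * wirtZBarR φ k z - z k * φ z := by
  have hρ : wirtZBar (fun w : Fin n → ℂ => 1 - ∑ l, w l * conj (w l)) k z = -z k := by
    rw [wirtZBar_sub (differentiableAt_const _) (by fun_prop),
      wirtZBar_sum_mul_conj (g := fun l w => w l) (fun l => by fun_prop)]
    simp [wirtZBar]
  have hfun : (fun w => (((1 - normSq' w) * φ w : ℝ) : ℂ)) =
      fun w => (1 - ∑ l, w l * conj (w l)) * (φ w : ℂ) := by
    funext w; push_cast [ofReal_normSq']; rfl
  have hφC : DifferentiableAt ℝ (fun w => (φ w : ℂ)) z := ofRealCLM.differentiableAt.comp z hφ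
  rw [wirtZBarR, hfun, wirtZBar_mul (by fun_prop) hφC, hρ,
    ← wirtZBarR, ofReal_normSq']
  ring

def sharpComponent (ψ : (Fin n → ℂ) → ℝ) (j : Fin n) (z : Fin n → ℂ) : ℂ :=
  wirtZBarR ψ j z + z j * (ψ z - ∑ l, conj (z l) * wirtZBarR ψ l z)

theorem sharpComponent_one_sub_normSq'_mul {φ : (Fin n → ℂ) → ℝ} {z : Fin n → ℂ}
    (hφ : DifferentiableAt ℝ φ z) (j : Fin n) :
    sharpComponent (fun w => (1 - normSq' w) * φ w) j z =
      (1 - normSq' z : ℝ) * (wirtZBarR φ j z - z j * ∑ l, conj (z l) * wirtZBarR φ l z) := by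
  have hs : ∑ l, conj (z l) * wirtZBarR (fun w => (1 - normSq' w) * φ w) l z =
      (1 - normSq' z) * ∑ l, conj (z l) * wirtZBarR φ l z - normSq' z * φ z := by
    simp only [wirtZBarR_one_sub_normSq'_mul hφ, ofReal_normSq', Finset.mul_sum, Finset.sum_mul,
      ← Finset.sum_sub_distrib]
    exact Finset.sum_congr rfl fun l _ => by ring
  rw [sharpComponent, hs, wirtZBarR_one_sub_normSq'_mul hφ]
  push_cast
  ring

theorem wirtZBar_sharpComponent {ψ : (Fin n → ℂ) → ℝ} {z : Fin n → ℂ}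
    (hψ : DifferentiableAt ℝ ψ z) (hψ' : ∀ l, DifferentiableAt ℝ (wirtZBarR ψ l) z) (j k : Fin n) :
    wirtZBar (sharpComponent ψ j) k z =
      wirtZBar (wirtZBarR ψ j) k z - z j * ∑ l, conj (z l) * wirtZBar (wirtZBarR ψ l) k z := by
  have hψC : DifferentiableAt ℝ (fun w => (ψ w : ℂ)) z := ofRealCLM.differentiableAt.comp z hψ
  have hconj : ∀ l, DifferentiableAt ℝ (fun w : Fin n → ℂ => conj (w l)) z := by fun_prop
  have hterm : ∀ l, DifferentiableAt ℝ (fun w => conj (w l) * wirtZBarR ψ l w) z :=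
    fun l => (hconj l).fun_mul (hψ' l)
  have hsum : DifferentiableAt ℝ (fun w => ∑ l, conj (w l) * wirtZBarR ψ l w) z :=
    DifferentiableAt.fun_sum fun l _ => hterm l
  have hA : wirtZBar (fun w => (ψ w : ℂ) - ∑ l, conj (w l) * wirtZBarR ψ l w) k z =
      -∑ l, conj (z l) * wirtZBar (wirtZBarR ψ l) k z := by
    rw [wirtZBar_sub hψC hsum, wirtZBar_sum fun l _ => hterm l]
    simp only [wirtZBar_mul (hconj _) (hψ' _), wirtZBar_conj_apply, Finset.sum_add_distrib]
    simp [Pi.single_apply, wirtZBarR]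
  have hcoord : DifferentiableAt ℂ (fun w : Fin n → ℂ => w j) z := by fun_prop
  rw [show sharpComponent ψ j = fun w => wirtZBarR ψ j w +
      w j * ((ψ w : ℂ) - ∑ l, conj (w l) * wirtZBarR ψ l w) from rfl,
    wirtZBar_add (hψ' j) ((hcoord.restrictScalars ℝ).fun_mul (hψC.fun_sub hsum)),
    wirtZBar_mul (hcoord.restrictScalars ℝ) (hψC.fun_sub hsum), hA,
    wirtZBar_eq_zero_of_differentiableAt hcoord]
  ring

theorem differentiableOn_sharpComponent_iff {ψ : (Fin n → ℂ) → ℝ}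
    (hψ : ContDiffOn ℝ 2 ψ (unitBall n)) :
    (∀ j, DifferentiableOn ℂ (sharpComponent ψ j) (unitBall n)) ↔
      ∀ j k, ∀ z ∈ unitBall n, wirtZBar (wirtZBarR ψ j) k z = 0 := by
  have hψC : ContDiffOn ℝ (1 + 1) (fun w => (ψ w : ℂ)) (unitBall n) :=
    ofRealCLM.contDiff.comp_contDiffOn hψ
  have hψd : ∀ z ∈ unitBall n, DifferentiableAt ℝ ψ z := fun z hz =>
    (hψ.differentiableOn two_ne_zero).differentiableAt (isOpen_unitBall.mem_nhds hz)
  have hψ'd : ∀ z ∈ unitBall n, ∀ l, DifferentiableAt ℝ (wirtZBarR ψ l) z := fun z hz l =>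
    ((hψC.wirtZBar isOpen_unitBall l).differentiableOn one_ne_zero).differentiableAt
      (isOpen_unitBall.mem_nhds hz)
  have hsharp : ∀ j, DifferentiableOn ℝ (sharpComponent ψ j) (unitBall n) := fun j z hz => by
    have hψz : DifferentiableAt ℝ (fun w => (ψ w : ℂ)) z :=
      ofRealCLM.differentiableAt.comp z (hψd z hz)
    have hψ'z := hψ'd z hz
    refine DifferentiableAt.differentiableWithinAt ?_
    unfold sharpComponent
    fun_prop
  simp_rw [differentiableOn_iff_wirtZBar_eq_zero isOpen_unitBall (hsharp _)]
  refine ⟨fun h j k z hz => ?_, fun h j k z hz => ?_⟩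
  · have hv := eq_zero_of_forall_eq_mul_sum_conj_mul (v := fun j => wirtZBar (wirtZBarR ψ j) k z)
      hz fun j => sub_eq_zero.1 <| by
        rw [← wirtZBar_sharpComponent (hψd z hz) (hψ'd z hz)]; exact h j k z hz
    exact congrFun hv j
  · simp [wirtZBar_sharpComponent (hψd z hz) (hψ'd z hz), h _ k z hz]

def hermitianPoly (c : Matrix (Fin n) (Fin n) ℂ) (α : Fin n → ℂ) (γ : ℝ) (z : Fin n → ℂ) : ℂ :=
  (∑ j, ∑ k, c j k * z j * conj (z k)) + ((∑ k, α k * z k).re : ℂ) + γ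

section HermitianPoly

variable {c : Matrix (Fin n) (Fin n) ℂ} {α : Fin n → ℂ} {γ : ℝ} {z : Fin n → ℂ}

theorem conj_hermitianPoly (hc : c.IsHermitian) :
    conj (hermitianPoly c α γ z) = hermitianPoly c α γ z := by
  have hquad :
      conj (∑ j, ∑ k, c j k * z j * conj (z k)) = ∑ j, ∑ k, c j k * z j * conj (z k) := by
    simp only [map_sum, map_mul, conj_conj]
    rw [Finset.sum_comm]
    refine Finset.sum_congr rfl fun j _ => Finset.sum_congr rfl fun k _ => ?_
    rw [← hc.apply j k, star_def]
    ring
  simp only [hermitianPoly, map_add, hquad, conj_ofReal]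

theorem wirtZBar_hermitianPoly (b : Fin n) :
    wirtZBar (hermitianPoly c α γ) b z = ∑ a, c a b * z a + conj (α b) / 2 := by
  have hfun : hermitianPoly c α γ = fun w => ((∑ k, α k * w k) / 2 + γ) +
      ∑ k, (∑ a, c a k * w a + conj (α k) / 2) * conj (w k) := by
    funext w
    have hquad : ∑ j, ∑ k, c j k * w j * conj (w k) = ∑ k, (∑ a, c a k * w a) * conj (w k) := by
      rw [Finset.sum_comm]
      simp only [Finset.sum_mul]
    have hre : ((∑ k, α k * w k).re : ℂ) =
        (∑ k, α k * w k) / 2 + ∑ k, conj (α k) / 2 * conj (w k) := by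
      rw [re_eq_add_conj, add_div]
      congr 1
      rw [map_sum, Finset.sum_div]
      exact Finset.sum_congr rfl fun k _ => by rw [map_mul]; ring
    rw [hermitianPoly, hquad, hre]
    simp only [add_mul, Finset.sum_add_distrib]
    ring
  rw [hfun, wirtZBar_add (by fun_prop) (by fun_prop),
    wirtZBar_sum_mul_conj (g := fun k w => ∑ a, c a k * w a + conj (α k) / 2)
      (fun k => by fun_prop),
    wirtZBar_eq_zero_of_differentiableAt (by fun_prop), zero_add]

end HermitianPoly

def complexHessian (ψ : (Fin n → ℂ) → ℝ) (z : Fin n → ℂ) : Matrix (Fin n) (Fin n) ℂ :=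
  Matrix.of fun a b => wirtZ (wirtZBarR ψ b) a z

section Recovery

variable {U : Set (Fin n → ℂ)} {ψ : (Fin n → ℂ) → ℝ} {z₀ : Fin n → ℂ}

theorem complexHessian_isHermitian {z : Fin n → ℂ} (hψ : ContDiffAt ℝ 2 ψ z) :
    (complexHessian ψ z).IsHermitian := by
  have hψC : ContDiffAt ℝ 2 (fun w => (ψ w : ℂ)) z := ofRealCLM.contDiff.contDiffAt.comp z hψ
  have hconj : wirtZ (fun w => (ψ w : ℂ)) = fun a w => conj (wirtZBarR ψ a w) := by
    funext a w; exact wirtZ_ofReal ψ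
  ext a b
  simp only [complexHessian, Matrix.conjTranspose_apply, Matrix.of_apply, star_def]
  change _ = wirtZ (wirtZBar (fun w => (ψ w : ℂ)) b) a z
  rw [wirtZ_wirtZBar_comm hψC, hconj, wirtZBar_conj]

theorem wirtZBar_wirtZBarR_eq_zero_of_eq_hermitianPoly {c : Matrix (Fin n) (Fin n) ℂ}
    {α : Fin n → ℂ} {γ : ℝ} (hU : IsOpen U) (h : ∀ z ∈ U, (ψ z : ℂ) = hermitianPoly c α γ z) :
    ∀ j k, ∀ z ∈ U, wirtZBar (wirtZBarR ψ j) k z = 0 := by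
  intro j k z hz
  have hloc : ∀ w ∈ U, wirtZBarR ψ j w = ∑ a, c a j * w a + conj (α j) / 2 := fun w hw => by
    rw [wirtZBarR, wirtZBar_congr (Filter.eventually_of_mem (hU.mem_nhds hw) h),
      wirtZBar_hermitianPoly]
  rw [wirtZBar_congr (Filter.eventually_of_mem (hU.mem_nhds hz) hloc)]
  exact wirtZBar_eq_zero_of_differentiableAt (by fun_prop) k

theorem complexHessian_eq_of_wirtZBar_wirtZBarR_eq_zero (hU : IsOpen U) (hUc : IsPreconnected U)
    (hψ : ContDiffOn ℝ 3 ψ U) (h : ∀ j k, ∀ z ∈ U, wirtZBar (wirtZBarR ψ j) k z = 0)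
    (hz₀ : z₀ ∈ U) : ∀ z ∈ U, complexHessian ψ z = complexHessian ψ z₀ := by
  have hψC : ContDiffOn ℝ (1 + 1 + 1) (fun w => (ψ w : ℂ)) U :=
    ofRealCLM.contDiff.comp_contDiffOn hψ
  have hbar : ∀ b, ContDiffOn ℝ (1 + 1) (wirtZBarR ψ b) U := hψC.wirtZBar hU
  have hM : ∀ a b, DifferentiableOn ℝ (wirtZ (wirtZBarR ψ b) a) U := fun a b =>
    ((hbar b).wirtZ hU a).differentiableOn one_ne_zero
  have hbarM : ∀ a b m, ∀ z ∈ U, wirtZBar (wirtZ (wirtZBarR ψ b) a) m z = 0 := by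
    intro a b m z hz
    have h0 : wirtZBar (wirtZBarR ψ b) m =ᶠ[nhds z] fun _ => 0 :=
      Filter.eventually_of_mem (hU.mem_nhds hz) (h b m)
    rw [← wirtZ_wirtZBar_comm ((hbar b).contDiffAt (hU.mem_nhds hz)), wirtZ_congr h0]
    simp [wirtZ]
  have hholM : ∀ a b m, ∀ z ∈ U, wirtZ (wirtZ (wirtZBarR ψ b) a) m z = 0 := by
    intro a b m z hz
    have hherm : ∀ w ∈ U, wirtZ (wirtZBarR ψ b) a w = conj (wirtZ (wirtZBarR ψ a) b w) :=
      fun w hw => ((complexHessian_isHermitian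
        ((hψ.contDiffAt (hU.mem_nhds hw)).of_le (by norm_num))).apply a b).symm
    rw [wirtZ_congr (Filter.eventually_of_mem (hU.mem_nhds hz) hherm), wirtZ_conj,
      hbarM b a m z hz, map_zero]
  intro z hz
  ext a b
  exact eq_of_wirtZ_eq_zero_of_wirtZBar_eq_zero hU hUc (hM a b) (hholM a b) (hbarM a b) hz₀ z hz

theorem wirtZBarR_eq_of_wirtZBar_wirtZBarR_eq_zero (hU : IsOpen U) (hUc : IsPreconnected U)
    (hψ : ContDiffOn ℝ 3 ψ U) (h : ∀ j k, ∀ z ∈ U, wirtZBar (wirtZBarR ψ j) k z = 0)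
    (hz₀ : z₀ ∈ U) (b : Fin n) :
    ∀ z ∈ U, wirtZBarR ψ b z = ∑ a, complexHessian ψ z₀ a b * z a +
      (wirtZBarR ψ b z₀ - ∑ a, complexHessian ψ z₀ a b * z₀ a) := by
  set c := complexHessian ψ z₀
  have hc := complexHessian_eq_of_wirtZBar_wirtZBarR_eq_zero hU hUc hψ h hz₀
  have hψC : ContDiffOn ℝ (1 + 1 + 1) (fun w => (ψ w : ℂ)) U :=
    ofRealCLM.contDiff.comp_contDiffOn hψ
  have hbar : ContDiffOn ℝ (1 + 1) (wirtZBarR ψ b) U := hψC.wirtZBar hU b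
  have hbard : ∀ z ∈ U, DifferentiableAt ℝ (wirtZBarR ψ b) z := fun z hz =>
    (hbar.differentiableOn (by norm_num)).differentiableAt (hU.mem_nhds hz)
  have hconst := eq_of_wirtZ_eq_zero_of_wirtZBar_eq_zero
    (f := fun w => wirtZBarR ψ b w - ∑ a, c a b * w a) hU hUc
    (fun z hz => ((hbard z hz).sub (by fun_prop)).differentiableWithinAt)
    (fun m z hz => by
      rw [wirtZ_sub (hbard z hz) (by fun_prop), wirtZ_sum_mul (fun a => c a b)]
      simpa [complexHessian, c, sub_eq_zero] using congrFun (congrFun (hc z hz) m) b)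
    (fun m z hz => by
      rw [wirtZBar_sub (hbard z hz) (by fun_prop), h b m z hz,
        wirtZBar_eq_zero_of_differentiableAt (by fun_prop), sub_zero])
    hz₀
  intro z hz
  linear_combination hconst z hz

theorem exists_hermitianPoly_of_wirtZBar_wirtZBarR_eq_zero (hU : IsOpen U)
    (hUc : IsPreconnected U) (hψ : ContDiffOn ℝ 3 ψ U)
    (h : ∀ j k, ∀ z ∈ U, wirtZBar (wirtZBarR ψ j) k z = 0) (hz₀ : z₀ ∈ U) :
    ∃ c : Matrix (Fin n) (Fin n) ℂ, c.IsHermitian ∧ ∃ α : Fin n → ℂ, ∃ γ : ℝ,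
      ∀ z ∈ U, (ψ z : ℂ) = hermitianPoly c α γ z := by
  set c := complexHessian ψ z₀
  set α : Fin n → ℂ := fun b => 2 * conj (wirtZBarR ψ b z₀ - ∑ a, c a b * z₀ a)
  set γ := ψ z₀ - (hermitianPoly c α 0 z₀).re
  have hc : c.IsHermitian :=
    complexHessian_isHermitian ((hψ.contDiffAt (hU.mem_nhds hz₀)).of_le (by norm_num))
  have hreal : ∀ w, ((hermitianPoly c α γ w).re : ℂ) = hermitianPoly c α γ w := fun w =>
    conj_eq_iff_re.1 (conj_hermitianPoly hc)
  have hEq : Set.EqOn ψ (fun w => (hermitianPoly c α γ w).re) U := by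
    refine eqOn_of_wirtZBarR_eq hU hUc (hψ.differentiableOn (by norm_num))
      (by unfold hermitianPoly; fun_prop) (fun k z hz => ?_) hz₀ ?_
    · rw [wirtZBarR_eq_of_wirtZBar_wirtZBarR_eq_zero hU hUc hψ h hz₀ k z hz]
      change _ = wirtZBar (fun w => ((hermitianPoly c α γ w).re : ℂ)) k z
      simp only [hreal, wirtZBar_hermitianPoly, α, map_mul, conj_conj, map_ofNat]
      ring
    · simp [γ, hermitianPoly]
  exact ⟨c, hc, α, γ, fun z hz => by rw [hEq hz, hreal]⟩

theorem wirtZBar_wirtZBarR_eq_zero_iff (hU : IsOpen U) (hUc : IsPreconnected U)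
    (hψ : ContDiffOn ℝ 3 ψ U) (hz₀ : z₀ ∈ U) :
    (∀ j k, ∀ z ∈ U, wirtZBar (wirtZBarR ψ j) k z = 0) ↔
      ∃ c : Matrix (Fin n) (Fin n) ℂ, c.IsHermitian ∧ ∃ α : Fin n → ℂ, ∃ γ : ℝ,
        ∀ z ∈ U, (ψ z : ℂ) = hermitianPoly c α γ z :=
  ⟨fun h => exists_hermitianPoly_of_wirtZBar_wirtZBarR_eq_zero hU hUc hψ h hz₀,
    fun ⟨_, _, _, _, h⟩ => wirtZBar_wirtZBarR_eq_zero_of_eq_hermitianPoly hU h⟩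

end Recovery

end

theorem stmt4_general (n : ℕ) (φ : (Fin n → ℂ) → ℝ)
    (hφ : ContDiffOn ℝ (⊤ : ℕ∞) φ (unitBall n)) :
    (∀ j : Fin n,
      DifferentiableOn ℂ
        (fun z =>
          ((1 - normSq' z : ℝ) : ℂ) *
            (wirtZBarR φ j z -
              z j * ∑ l, (starRingEnd ℂ) (z l) * wirtZBarR φ l z)) (unitBall n)) ↔
      ∃ c : Matrix (Fin n) (Fin n) ℂ, c.IsHermitian ∧
        ∃ α : Fin n → ℂ, ∃ γ : ℝ,
          ∀ z ∈ unitBall n,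
            (((1 - normSq' z) * φ z : ℝ) : ℂ) =
              (∑ j, ∑ k, c j k * z j * (starRingEnd ℂ) (z k)) +
                (((∑ k, α k * z k).re : ℝ) : ℂ) + (γ : ℂ) := by
  set ψ : (Fin n → ℂ) → ℝ := fun w => (1 - normSq' w) * φ w
  have hψ : ContDiffOn ℝ (⊤ : ℕ∞) ψ (unitBall n) :=
    (contDiff_const.sub contDiff_normSq').contDiffOn.mul hφ
  have hφd : ∀ z ∈ unitBall n, DifferentiableAt ℝ φ z := fun z hz =>
    (hφ.differentiableOn (by simp)).differentiableAt (isOpen_unitBall.mem_nhds hz)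
  calc _ ↔ ∀ j, DifferentiableOn ℂ (sharpComponent ψ j) (unitBall n) :=
        forall_congr' fun j => differentiableOn_congr fun z hz =>
          (sharpComponent_one_sub_normSq'_mul (hφd z hz) j).symm
    _ ↔ ∀ j k, ∀ z ∈ unitBall n, wirtZBar (wirtZBarR ψ j) k z = 0 :=
        differentiableOn_sharpComponent_iff (hψ.of_le (WithTop.coe_le_coe.2 le_top))
    _ ↔ _ := wirtZBar_wirtZBarR_eq_zero_iff isOpen_unitBall convex_unitBall.isPreconnected
        (hψ.of_le (WithTop.coe_le_coe.2 le_top)) zero_mem_unitBall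

/-- for smooth `φ : 𝔹ⁿ → ℝ` with `{φ > 0}` nonempty, the
components `(1 − |z|²)(∂φ/∂z̄ⱼ − zⱼ Σ_l z̄_l ∂φ/∂z̄_l)` of the gradient field of
`φ` w.r.t. the complex hyperbolic metric are all holomorphic on `𝔹ⁿ` iff
`(1 − |z|²) φ(z) = Σ c_{jk} z_j z̄_k + Re Σ α_k z_k + γ` for a Hermitian matrix
`c`, complex constants `α` and a real constant `γ`. -/
theorem stmt4 (n : ℕ) (hn : 2 ≤ n) (φ : (Fin n → ℂ) → ℝ)
    (hφ : ContDiffOn ℝ (⊤ : ℕ∞) φ (unitBall n))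
    (hpos : ∃ z ∈ unitBall n, 0 < φ z) :
    (∀ j : Fin n,
      DifferentiableOn ℂ
        (fun z =>
          ((1 - normSq' z : ℝ) : ℂ) *
            (wirtZBarR φ j z -
              z j * ∑ l, (starRingEnd ℂ) (z l) * wirtZBarR φ l z)) (unitBall n)) ↔
      ∃ c : Matrix (Fin n) (Fin n) ℂ, c.IsHermitian ∧
        ∃ α : Fin n → ℂ, ∃ γ : ℝ,
          ∀ z ∈ unitBall n,
            (((1 - normSq' z) * φ z : ℝ) : ℂ) =
              (∑ j, ∑ k, c j k * z j * (starRingEnd ℂ) (z k)) +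
                (((∑ k, α k * z k).re : ℝ) : ℂ) + (γ : ℂ) :=
  stmt4_general n φ hφ
end
end

section
/- Let G_1,…,G_n : [0,∞) → ℝ be smooth functions such that the matrix H(z)_{jk} = (∂χ̃/∂r_j)(r) δ_{jk} + z̄_j z_k (∂²χ̃/∂r_j∂r_k)(r), where χ̃(r_1,…,r_n) = Π_{j=1}^n G_j(r_j) and r = (|z_1|²,…,|z_n|²), is positive definite for all z ∈ ℂⁿ. Let ψ(z) = ψ̃(|z_1|²,…,|z_n|²) be a smooth real-valued multi-radial function. Then for each j the function z ↦ Σ_k (H(z)^{-T})_{jk} ∂ψ/∂z̄_k is holomorphic on ℂⁿ if and only if there exist real constants C_0, C_1, …, C_n with ψ(z) = C_0 + Σ_{j=1}^n C_j |z_j|² G_j'(|z_j|²) Π_{k ≠ j} G_k(|z_k|²); in that case Σ_k (H(z)^{-T})_{jk} ∂ψ/∂z̄_k = C_j z_j for every j. -/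
/-!
The torus `(S¹)ⁿ` acts on `ℂⁿ` by `(u • z)ⱼ = uⱼ zⱼ`. Since `rad (u • z) = rad z`, the metric
transforms as `H(u • z) = D(u)⁻¹ H(z) D(u)` and `∂̄ψ(u • z) = D(u) ∂̄ψ(z)` with `D(u) = diag u`,
so the components of the gradient field `V = (∂̄ψ)^♯ = gradField χ̃ ψ` satisfy
`Vⱼ(u • z) = uⱼ Vⱼ(z)`. A holomorphic function with this equivariance is linear (on each complex
line through `0` it agrees with a linear function on the unit circle, hence everywhere) and it
kills every `w` with `wⱼ = 0` (take `u = -1` off the `j`-th slot), so `Vⱼ(z) = cⱼ zⱼ`.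

For `Φ_C(r) = eulerSum χ̃ C r = Σⱼ Cⱼ rⱼ ∂ⱼχ̃(r)` one computes `Hᵀ (C z) = ∂̄(Φ_C ∘ rad)`; for
`χ̃ = Π Gⱼ` this `Φ_C` is the potential of the statement. Hence `V = C z` when
`ψ = C₀ + Φ_C ∘ rad`. Conversely, `V = c z` gives `zₖ ∂ₖψ̃ = zₖ (∂ₖΦ_{Re c} + i ∂ₖΦ_{Im c})`;
taking real parts, `ψ̃ - Φ_{Re c}` has vanishing partial derivatives `∂ₖ` wherever `zₖ ≠ 0`,
which makes `(ψ̃ - Φ_{Re c}) ∘ rad` constant.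
-/

open Complex MeasureTheory Finset
open scoped ComplexOrder

noncomputable section

/-- Partial derivative `∂f/∂rⱼ` of a function `f : ℝⁿ → ℝ`. -/
def pderiv' {n : ℕ} (f : (Fin n → ℝ) → ℝ) (j : Fin n) (r : Fin n → ℝ) : ℝ :=
  fderiv ℝ f r (Pi.single j 1)

/-- The radii `r = (|z₁|², …, |zₙ|²)`. -/
def rad {n : ℕ} (z : Fin n → ℂ) : Fin n → ℝ := fun i => Complex.normSq (z i)

/-- The Kähler metric `H(z)ⱼₖ = (∂χ̃/∂rⱼ) δⱼₖ + z̄ⱼ zₖ ∂²χ̃/∂rⱼ∂rₖ` induced by a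
multi-radial potential `χ̃`. -/
def radialMetric {n : ℕ} (χ : (Fin n → ℝ) → ℝ) (z : Fin n → ℂ) :
    Matrix (Fin n) (Fin n) ℂ := fun j k =>
  ((pderiv' χ j (rad z) : ℝ) : ℂ) * (if j = k then 1 else 0) +
    (starRingEnd ℂ) (z j) * z k * ((pderiv' (pderiv' χ j) k (rad z) : ℝ) : ℂ)

open Matrix Filter Topology

lemma eq_of_forall_circle_eq {f g : ℂ → ℂ} (hf : Differentiable ℂ f) (hg : Differentiable ℂ g)
    (h : ∀ u : Circle, f u = g u) : f = g := by
  have hexp : HasDerivAt (fun t : ℝ => (Circle.exp t : ℂ)) I 0 := by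
    simpa [Circle.coe_exp] using ((hasDerivAt_id (0 : ℝ)).ofReal_comp.mul_const I).cexp
  have hacc : Tendsto (fun t : ℝ => (Circle.exp t : ℂ)) (𝓝[≠] 0) (𝓝[≠] 1) := by
    simpa using hexp.tendsto_nhdsNE I_ne_zero
  exact AnalyticOnNhd.eq_of_frequently_eq (fun z _ => hf.analyticAt z)
    (fun z _ => hg.analyticAt z)
    (hacc.frequently (Frequently.of_forall fun t => h (Circle.exp t)))

lemma eq_fderiv_apply_of_circle_equivariant {E : Type*} [NormedAddCommGroup E] [NormedSpace ℂ E]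
    {F : E → ℂ} (hF : Differentiable ℂ F) (hequiv : ∀ (u : Circle) z, F (u • z) = u * F z)
    (z : E) : F z = fderiv ℂ F 0 z := by
  have hline : (fun t : ℂ => F (t • z)) = fun t => t * F z :=
    eq_of_forall_circle_eq (hF.comp (differentiable_id.smul_const z))
      (differentiable_id.mul_const _) fun u => hequiv u z
  have hd : HasDerivAt (fun t : ℂ => F (t • z)) (fderiv ℂ F 0 z) 0 := by
    have hd0 : HasDerivAt (fun t : ℂ => t • z) z 0 := by
      simpa using (hasDerivAt_id (0 : ℂ)).smul_const z
    have hcomp := (hF ((0 : ℂ) • z)).hasFDerivAt.comp_hasDerivAt 0 hd0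
    rwa [zero_smul] at hcomp
  rw [hline] at hd
  exact (hd.unique (hasDerivAt_mul_const _)).symm

lemma eq_mul_apply_of_torus_equivariant {ι : Type*} [Fintype ι] [DecidableEq ι]
    {F : (ι → ℂ) → ℂ} (hF : Differentiable ℂ F) (j : ι)
    (hequiv : ∀ (u : ι → Circle) z, F (u • z) = u j * F z) (z : ι → ℂ) :
    F z = F (Pi.single j 1) * z j := by
  have hlin := eq_fderiv_apply_of_circle_equivariant hF fun u w => hequiv (fun _ => u) w
  have hvanish : ∀ w : ι → ℂ, w j = 0 → F w = 0 := by
    intro w hw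
    have hflip : Function.update (fun _ => (-1 : Circle)) j 1 • w = -w := by
      ext k
      rcases eq_or_ne k j with rfl | hk <;> simp [Circle.smul_def, *]
    have h := hequiv (Function.update (fun _ => -1) j 1) w
    rw [hflip, hlin (-w), map_neg, ← hlin w, Function.update_self, Circle.coe_one, one_mul] at h
    linear_combination (-1 / 2 : ℂ) * h
  have hsplit : z = z j • Pi.single j 1 + Function.update z j 0 := by
    ext k
    rcases eq_or_ne k j with rfl | hk <;> simp [*]
  calc F z = fderiv ℂ F 0 (z j • Pi.single j 1 + Function.update z j 0) := by rw [← hsplit, hlin]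
    _ = z j * F (Pi.single j 1) + F (Function.update z j 0) := by
      rw [map_add, map_smul, ← hlin, ← hlin, smul_eq_mul]
    _ = F (Pi.single j 1) * z j := by rw [hvanish _ (Function.update_self ..)]; ring

section

variable {n : ℕ}

lemma hasFDerivAt_rad (z : Fin n → ℂ) :
    HasFDerivAt rad (ContinuousLinearMap.pi fun i =>
      2 • (innerSL ℝ (z i)).comp (ContinuousLinearMap.proj i)) z := by
  refine hasFDerivAt_pi.2 fun i => ?_
  simpa [rad, Complex.normSq_eq_norm_sq] using
    ((ContinuousLinearMap.proj (R := ℝ) (φ := fun _ : Fin n => ℂ) i).hasFDerivAt (x := z)).norm_sq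

lemma fderiv_comp_rad_single {f : (Fin n → ℝ) → ℝ} {z : Fin n → ℂ}
    (hf : DifferentiableAt ℝ f (rad z)) (k : Fin n) (v : ℂ) :
    fderiv ℝ (fun w => f (rad w)) z (Pi.single k v) =
      2 * inner ℝ (z k) v * pderiv' f k (rad z) := by
  have hsingle : (ContinuousLinearMap.pi fun i =>
      2 • (innerSL ℝ (z i)).comp (ContinuousLinearMap.proj i)) (Pi.single k v) =
      (2 * inner ℝ (z k) v) • (Pi.single k 1 : Fin n → ℝ) := by
    ext i
    rcases eq_or_ne i k with rfl | hik <;> simp [*, inner, mul_add]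
  change fderiv ℝ (f ∘ rad) z _ = _
  rw [(hf.hasFDerivAt.comp z (hasFDerivAt_rad z)).fderiv, ContinuousLinearMap.comp_apply, hsingle,
    map_smul, smul_eq_mul, pderiv']

lemma wirtZBarR_comp_rad {f : (Fin n → ℝ) → ℝ} {z : Fin n → ℂ}
    (hf : DifferentiableAt ℝ f (rad z)) (k : Fin n) :
    wirtZBarR (fun w => f (rad w)) k z = z k * (pderiv' f k (rad z) : ℂ) := by
  have hd : DifferentiableAt ℝ (fun w => f (rad w)) z :=
    hf.comp z (hasFDerivAt_rad z).differentiableAt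
  have hc : ∀ v, fderiv ℝ (fun w => (f (rad w) : ℂ)) z v = (fderiv ℝ (fun w => f (rad w)) z v : ℂ) :=
    fun v => by
      change fderiv ℝ (ofRealCLM ∘ fun w => f (rad w)) z v = _
      rw [(ofRealCLM.hasFDerivAt.comp z hd.hasFDerivAt).fderiv]; rfl
  simp only [wirtZBarR, wirtZBar, hc, fderiv_comp_rad_single hf, Complex.inner]
  apply Complex.ext <;> simp <;> ring

lemma differentiable_pderiv' {f : (Fin n → ℝ) → ℝ} (hf : ContDiff ℝ 2 f) (j : Fin n) :
    Differentiable ℝ (pderiv' f j) :=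
  ((hf.fderiv_right (m := 1) le_rfl).clm_apply contDiff_const).differentiable one_ne_zero

lemma hasDerivAt_comp_update {f : (Fin n → ℝ) → ℝ} {r : Fin n → ℝ}
    (hf : DifferentiableAt ℝ f r) (j : Fin n) :
    HasDerivAt (fun t => f (Function.update r j t)) (pderiv' f j r) (r j) := by
  rw [← Function.update_eq_self j r] at hf
  have hd := hf.hasFDerivAt.comp_hasDerivAt (r j) (hasDerivAt_update r j (r j))
  rwa [Function.update_eq_self] at hd

lemma pderiv'_prod {G : Fin n → ℝ → ℝ} (hG : ∀ j, Differentiable ℝ (G j))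
    (j : Fin n) (r : Fin n → ℝ) :
    pderiv' (fun r => ∏ k, G k (r k)) j r = deriv (G j) (r j) * ∏ k ∈ univ.erase j, G k (r k) := by
  have hupdate : (fun t => ∏ k, G k (Function.update r j t k)) =
      fun t => G j t * ∏ k ∈ univ.erase j, G k (r k) := by
    funext t
    rw [← mul_prod_erase univ _ (mem_univ j), Function.update_self]
    congr 1
    exact prod_congr rfl fun k hk => by rw [Function.update_of_ne (ne_of_mem_erase hk)]
  have hd := hasDerivAt_comp_update (f := fun r => ∏ k, G k (r k)) (r := r) (by fun_prop) j
  rw [hupdate] at hd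
  exact hd.unique ((hG j (r j)).hasDerivAt.mul_const _)

def eulerSum (χ : (Fin n → ℝ) → ℝ) (C : Fin n → ℝ) (r : Fin n → ℝ) : ℝ :=
  ∑ j, C j * (r j * pderiv' χ j r)

lemma differentiable_eulerSum {χ : (Fin n → ℝ) → ℝ} (hχ : ContDiff ℝ 2 χ)
    (C : Fin n → ℝ) : Differentiable ℝ (eulerSum χ C) := by
  have := differentiable_pderiv' hχ
  unfold eulerSum
  fun_prop

lemma pderiv'_eulerSum {χ : (Fin n → ℝ) → ℝ} (hχ : ContDiff ℝ 2 χ) (C : Fin n → ℝ)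
    (k : Fin n) (r : Fin n → ℝ) :
    pderiv' (eulerSum χ C) k r =
      C k * pderiv' χ k r + ∑ j, C j * r j * pderiv' (pderiv' χ j) k r := by
  have hd : HasFDerivAt (eulerSum χ C) (∑ j, C j • (r j • fderiv ℝ (pderiv' χ j) r +
      pderiv' χ j r • ContinuousLinearMap.proj j)) r := by
    refine HasFDerivAt.fun_sum fun j _ => ((hasFDerivAt_apply j r).mul
      (differentiable_pderiv' hχ j r).hasFDerivAt).const_mul (C j)
  rw [pderiv', hd.fderiv]
  simp [Pi.single_apply, sum_add_distrib, pderiv', mul_assoc, add_comm]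

lemma eulerSum_prod {G : Fin n → ℝ → ℝ} (hG : ∀ j, Differentiable ℝ (G j))
    (C r : Fin n → ℝ) :
    eulerSum (fun r => ∏ k, G k (r k)) C r =
      ∑ j, C j * r j * deriv (G j) (r j) * ∏ k ∈ univ.erase j, G k (r k) := by
  simp only [eulerSum, pderiv'_prod hG]
  exact sum_congr rfl fun j _ => by ring

lemma vecMul_radialMetric {χ : (Fin n → ℝ) → ℝ} (hχ : ContDiff ℝ 2 χ) (C : Fin n → ℝ)
    (z : Fin n → ℂ) :
    (fun l => (C l : ℂ) * z l) ᵥ* radialMetric χ z =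
      fun k => z k * (pderiv' (eulerSum χ C) k (rad z) : ℂ) := by
  ext k
  have hrad : ∀ l, (rad z l : ℂ) = starRingEnd ℂ (z l) * z l := fun l => normSq_eq_conj_mul_self
  simp only [Matrix.vecMul, dotProduct, radialMetric, pderiv'_eulerSum hχ, mul_add, sum_add_distrib]
  push_cast
  simp only [hrad, mul_ite, mul_one, mul_zero, sum_ite_eq', mem_univ, if_true]
  rw [mul_add, Finset.mul_sum]
  exact congrArg₂ _ (by ring) (sum_congr rfl fun l _ => by ring)

def gradField (χ : (Fin n → ℝ) → ℝ) (ψ : (Fin n → ℂ) → ℝ) (z : Fin n → ℂ) :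
    Fin n → ℂ :=
  (fun k => wirtZBarR ψ k z) ᵥ* (radialMetric χ z)⁻¹

lemma gradField_apply (χ : (Fin n → ℝ) → ℝ) (ψ : (Fin n → ℂ) → ℝ) (z : Fin n → ℂ)
    (j : Fin n) :
    gradField χ ψ z j = ∑ k, ((radialMetric χ z)⁻¹).transpose j k * wirtZBarR ψ k z := by
  simp only [gradField, Matrix.vecMul, dotProduct, Matrix.transpose_apply, mul_comm]

lemma gradField_eq_iff {χ : (Fin n → ℝ) → ℝ} {ψt : (Fin n → ℝ) → ℝ} {z : Fin n → ℂ}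
    (hψt : DifferentiableAt ℝ ψt (rad z)) (hH : IsUnit (radialMetric χ z).det) (v : Fin n → ℂ) :
    gradField χ (fun w => ψt (rad w)) z = v ↔
      (fun k => z k * (pderiv' ψt k (rad z) : ℂ)) = v ᵥ* radialMetric χ z := by
  simp only [gradField, wirtZBarR_comp_rad hψt]
  constructor
  · rintro rfl
    rw [Matrix.vecMul_vecMul, Matrix.nonsing_inv_mul _ hH, Matrix.vecMul_one]
  · intro h
    rw [h, Matrix.vecMul_vecMul, Matrix.mul_nonsing_inv _ hH, Matrix.vecMul_one]

lemma rad_smul (u : Fin n → Circle) (z : Fin n → ℂ) : rad (u • z) = rad z := by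
  ext k
  simp [rad, Circle.smul_def]

lemma radialMetric_smul (χ : (Fin n → ℝ) → ℝ) (u : Fin n → Circle) (z : Fin n → ℂ) :
    radialMetric χ (u • z) =
      Matrix.diagonal (fun k => (u k : ℂ)⁻¹) * radialMetric χ z *
        Matrix.diagonal (fun k => (u k : ℂ)) := by
  ext j k
  simp only [Matrix.mul_diagonal, Matrix.diagonal_mul, radialMetric, rad_smul, Pi.smul_apply',
    Circle.smul_def, smul_eq_mul, map_mul, ← Circle.coe_inv_eq_conj, Circle.coe_inv]
  rcases eq_or_ne j k with rfl | hjk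
  · field_simp [Circle.coe_ne_zero]
  · simp only [hjk, if_false]
    ring

lemma gradField_smul (χ : (Fin n → ℝ) → ℝ) {ψt : (Fin n → ℝ) → ℝ}
    (hψt : Differentiable ℝ ψt) (u : Fin n → Circle) (z : Fin n → ℂ) :
    gradField χ (fun w => ψt (rad w)) (u • z) = u • gradField χ (fun w => ψt (rad w)) z := by
  set D := Matrix.diagonal (fun k => (u k : ℂ))
  set D' := Matrix.diagonal (fun k => (u k : ℂ)⁻¹)
  have hD'D : D' * D = 1 := by simp [D, D', Matrix.diagonal_mul_diagonal]
  have hDD' : D * D' = 1 := by simp [D, D', Matrix.diagonal_mul_diagonal]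
  have hsmul : ∀ v : Fin n → ℂ, u • v = v ᵥ* D := fun v => by
    ext k; simp [D, Matrix.vecMul_diagonal, Circle.smul_def, mul_comm]
  have hwirt : (fun k => wirtZBarR (fun w => ψt (rad w)) k (u • z)) =
      (fun k => wirtZBarR (fun w => ψt (rad w)) k z) ᵥ* D := by
    rw [← hsmul]
    ext k
    simp [wirtZBarR_comp_rad (hψt _), rad_smul, Circle.smul_def, mul_assoc]
  rw [gradField, gradField, hwirt, radialMetric_smul, Matrix.mul_inv_rev, Matrix.mul_inv_rev,
    Matrix.inv_eq_left_inv hD'D, Matrix.inv_eq_left_inv hDD', hsmul]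
  simp only [Matrix.vecMul_vecMul, ← Matrix.mul_assoc, hDD', Matrix.one_mul]

lemma gradField_const_add_eulerSum {χ : (Fin n → ℝ) → ℝ} (hχ : ContDiff ℝ 2 χ)
    (C₀ : ℝ) (C : Fin n → ℝ) {z : Fin n → ℂ} (hH : IsUnit (radialMetric χ z).det) :
    gradField χ (fun w => C₀ + eulerSum χ C (rad w)) z = fun k => C k * z k := by
  rw [gradField_eq_iff (((differentiable_eulerSum hχ C).const_add C₀) _) hH,
    vecMul_radialMetric hχ]
  simp only [pderiv', fderiv_const_add]

lemma comp_rad_eq_of_pderiv'_eq_zero {g : (Fin n → ℝ) → ℝ} (hg : Differentiable ℝ g)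
    (h : ∀ z k, z k ≠ 0 → pderiv' g k (rad z) = 0) (z : Fin n → ℂ) : g (rad z) = g 0 := by
  have hfderiv : ∀ z, fderiv ℝ (fun w => g (rad w)) z = 0 := by
    intro z
    ext1 v
    rw [← univ_sum_single v, map_sum]
    refine sum_eq_zero fun k _ => ?_
    rw [fderiv_comp_rad_single (hg _)]
    rcases eq_or_ne (z k) 0 with hk | hk
    · simp [hk]
    · simp [h z k hk]
  have hconst := is_const_of_fderiv_eq_zero (hg.comp fun w => (hasFDerivAt_rad w).differentiableAt)
    hfderiv z 0
  have hrad0 : rad (0 : Fin n → ℂ) = 0 := by ext; simp [rad]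
  rwa [Function.comp_apply, Function.comp_apply, hrad0] at hconst

lemma exists_eq_eulerSum_of_gradField_eq {χ : (Fin n → ℝ) → ℝ} (hχ : ContDiff ℝ 2 χ)
    (hH : ∀ z, IsUnit (radialMetric χ z).det) {ψt : (Fin n → ℝ) → ℝ}
    (hψt : Differentiable ℝ ψt) (c : Fin n → ℂ)
    (hc : ∀ z, gradField χ (fun w => ψt (rad w)) z = fun k => c k * z k) (z : Fin n → ℂ) :
    ψt (rad z) = ψt 0 + eulerSum χ (fun k => (c k).re) (rad z) := by
  set a : Fin n → ℝ := fun k => (c k).re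
  set b : Fin n → ℝ := fun k => (c k).im
  have hsplit : ∀ z : Fin n → ℂ, (fun k => c k * z k) ᵥ* radialMetric χ z =
      fun k => z k * (pderiv' (eulerSum χ a) k (rad z) + pderiv' (eulerSum χ b) k (rad z) * I) := by
    intro z
    have hc : (fun k => c k * z k) = (fun k => (a k : ℂ) * z k) + I • fun k => (b k : ℂ) * z k := by
      ext k
      simp only [Pi.add_apply, Pi.smul_apply, smul_eq_mul, a, b]
      linear_combination (-z k) * re_add_im (c k)
    rw [hc, add_vecMul, smul_vecMul, vecMul_radialMetric hχ, vecMul_radialMetric hχ]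
    ext k
    simp only [Pi.add_apply, Pi.smul_apply, smul_eq_mul]
    ring
  have hpderiv : ∀ z k, z k ≠ 0 → pderiv' (fun r => ψt r - eulerSum χ a r) k (rad z) = 0 := by
    intro z k hk
    have hk' := congrFun (((gradField_eq_iff (hψt _) (hH z) _).1 (hc z)).trans (hsplit z)) k
    have hre := congrArg re (mul_left_cancel₀ hk hk')
    simp only [ofReal_re, add_re, mul_re, ofReal_im, I_re, I_im, mul_zero, mul_one, sub_zero,
      add_zero] at hre
    rw [pderiv', fderiv_fun_sub (hψt _) (differentiable_eulerSum hχ a _)]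
    exact sub_eq_zero.2 hre
  have hconst := comp_rad_eq_of_pderiv'_eq_zero (hψt.sub (differentiable_eulerSum hχ a)) hpderiv z
  have hzero : eulerSum χ a 0 = 0 := by simp [eulerSum]
  simp only [Pi.sub_apply, hzero, sub_zero] at hconst
  linarith

lemma gradField_eq_mul_of_differentiable {χ : (Fin n → ℝ) → ℝ} {ψt : (Fin n → ℝ) → ℝ}
    (hψt : Differentiable ℝ ψt)
    (hhol : ∀ j, Differentiable ℂ fun z => gradField χ (fun w => ψt (rad w)) z j)
    (z : Fin n → ℂ) :
    gradField χ (fun w => ψt (rad w)) z =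
      fun j => gradField χ (fun w => ψt (rad w)) (Pi.single j 1) j * z j :=
  funext fun j => eq_mul_apply_of_torus_equivariant (hhol j) j
    (fun u w => by rw [gradField_smul χ hψt, Pi.smul_apply', Circle.smul_def, smul_eq_mul]) z

end

/-- for the Kähler metric on `ℂⁿ` with product multi-radial
potential `χ̃(r) = Π Gⱼ(rⱼ)` (assumed positive definite) and a smooth
multi-radial weight `ψ`, the gradient field `(∂̄ψ)^♯` is holomorphic iff
`ψ(z) = C₀ + Σ Cⱼ |zⱼ|² Gⱼ'(|zⱼ|²) Π_{k≠j} Gₖ(|zₖ|²)`; in that case the `j`-th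
component of the gradient field equals `Cⱼ zⱼ`. -/
theorem stmt8 (n : ℕ) (G : Fin n → ℝ → ℝ)
    (hG : ∀ j, ContDiff ℝ (⊤ : ℕ∞) (G j))
    (χ : (Fin n → ℝ) → ℝ) (hχ : ∀ r : Fin n → ℝ, χ r = ∏ j, G j (r j))
    (hpos : ∀ z : Fin n → ℂ, (radialMetric χ z).PosDef)
    (ψt : (Fin n → ℝ) → ℝ) (hψt : ContDiff ℝ (⊤ : ℕ∞) ψt)
    (ψ : (Fin n → ℂ) → ℝ) (hψ : ∀ z, ψ z = ψt (rad z)) :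
    ((∀ j : Fin n,
        Differentiable ℂ
          (fun z => ∑ k, ((radialMetric χ z)⁻¹).transpose j k * wirtZBarR ψ k z)) ↔
      ∃ C₀ : ℝ, ∃ C : Fin n → ℝ,
        ∀ z : Fin n → ℂ,
          ψ z = C₀ + ∑ j, C j * Complex.normSq (z j) *
              deriv (G j) (Complex.normSq (z j)) *
              ∏ k ∈ Finset.univ.erase j, G k (Complex.normSq (z k))) ∧
    (∀ C₀ : ℝ, ∀ C : Fin n → ℝ,
      (∀ z : Fin n → ℂ,
        ψ z = C₀ + ∑ j, C j * Complex.normSq (z j) *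
            deriv (G j) (Complex.normSq (z j)) *
            ∏ k ∈ Finset.univ.erase j, G k (Complex.normSq (z k))) →
      ∀ j : Fin n, ∀ z : Fin n → ℂ,
        (∑ k, ((radialMetric χ z)⁻¹).transpose j k * wirtZBarR ψ k z) =
          ((C j : ℝ) : ℂ) * z j) := by
  have hG' : ∀ j, Differentiable ℝ (G j) := fun j => (hG j).differentiable (by simp)
  have hψt' : Differentiable ℝ ψt := hψt.differentiable (by simp)
  have hχ2 : ContDiff ℝ 2 χ := by
    rw [funext hχ]
    have := fun j => (hG j).of_le (m := 2) (WithTop.coe_le_coe.2 le_top)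
    fun_prop
  have hH : ∀ z, IsUnit (radialMetric χ z).det := fun z => (hpos z).det_pos.ne'.isUnit
  have hform : ∀ (C : Fin n → ℝ) (z : Fin n → ℂ), (∑ j, C j * normSq (z j) *
      deriv (G j) (normSq (z j)) * ∏ k ∈ univ.erase j, G k (normSq (z k))) =
        eulerSum χ C (rad z) := fun C z => by
    rw [funext hχ, eulerSum_prod hG']
    rfl
  obtain rfl : ψ = fun z => ψt (rad z) := funext hψ
  simp only [← gradField_apply, hform]
  have hgrad : ∀ (C₀ : ℝ) (C : Fin n → ℝ), (∀ z, ψt (rad z) = C₀ + eulerSum χ C (rad z)) →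
      ∀ j z, gradField χ (fun w => ψt (rad w)) z j = C j * z j := by
    intro C₀ C hC j z
    rw [funext hC, gradField_const_add_eulerSum hχ2 C₀ C (hH z)]
  refine ⟨⟨fun hhol => ⟨_, _, exists_eq_eulerSum_of_gradField_eq hχ2 hH hψt' _
    (gradField_eq_mul_of_differentiable hψt' hhol)⟩, fun ⟨C₀, C, hC⟩ j => ?_⟩, hgrad⟩
  simp_rw [hgrad C₀ C hC j]
  fun_prop
end
end
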